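/- Let κ, κ' : X × X → ℂ be bounded Borel G-equivariant kernels of propagation at most r and r' respectively, and define their composition by (κ ⋆ κ')(x,x') := ∫_X κ(x,y) κ'(y,x') dμ(y); for each fixed x, x' the integrand is bounded, Borel, and supported in the compact closed ball of radius r around x, hence μ-integrable. Then for all x, x' ∈ X, Av(κ ⋆ κ')(x,x') = ∫_{X/G} Av(κ)(x, s₀(ω)) · Av(κ')(s₀(ω), x') dν(ω). In other words, the averaging map Av is multiplicative with respect to composition of kernels on X and composition of kernels over the orbit space X/G. -/

import Mathlib

/-!
After the substitution `g ↦ g⁻¹`, `Av(κ ⋆ κ')(x, x') = ∫_G ∫_X κ(g x, y) κ'(y, x') dμ(y) dg`.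
By finite propagation the integrand vanishes unless `y ∈ B(x', r')` and `g x ∈ B(x', r + r')`;
properness of the action makes the latter set of `g` compact, so the integrand is bounded and
supported in a rectangle of finite measure, and Fubini applies although Haar measure need not be
σ-finite. Swapping the integrals gives `∫_X Av(κ)(x, y) κ'(y, x') dμ(y)`. Weil's formula turns
this into an integral over `X/G` of `∫_G Av(κ)(x, h s₀) κ'(h s₀, x') dh`, and since `Av(κ)(x, ·)`
is `G`-invariant (equivariance of `κ` and left invariance of Haar measure) it factors out,
leaving `Av(κ')(s₀, x')`.
-/

open MeasureTheory Function Metric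

section FiniteRectangle

variable {α β E : Type*} [MeasurableSpace α] [MeasurableSpace β] [NormedAddCommGroup E]
  {μ : Measure α} {ν : Measure β}

theorem integrable_of_bounded_of_support_subset {f : α → E} {s : Set α} (hs : μ s ≠ ⊤)
    (hf : AEStronglyMeasurable f μ) {C : ℝ} (hC : ∀ a, ‖f a‖ ≤ C) (hsupp : support f ⊆ s) :
    Integrable f μ :=
  (integrableOn_iff_integrable_of_support_subset hsupp).mp <|
    Measure.integrableOn_of_bounded hs hf (.of_forall hC)

variable [NormedSpace ℝ E] {F : α × β → E} {s : Set α} {t : Set β}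

omit [MeasurableSpace β] in
theorem integral_left_eq_setIntegral_of_support_subset_prod (hsupp : support F ⊆ s ×ˢ t)
    (b : β) : ∫ a, F (a, b) ∂μ = ∫ a in s, F (a, b) ∂μ :=
  (setIntegral_eq_integral_of_forall_compl_eq_zero fun _ ha =>
    notMem_support.mp fun h => ha (hsupp h).1).symm

omit [MeasurableSpace β] in
theorem integral_left_eq_zero_of_support_subset_prod (hsupp : support F ⊆ s ×ˢ t) {b : β}
    (hb : b ∉ t) : ∫ a, F (a, b) ∂μ = 0 :=
  integral_eq_zero_of_ae <| .of_forall fun _ => notMem_support.mp fun h => hb (hsupp h).2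

theorem integral_integral_eq_setIntegral_setIntegral (hsupp : support F ⊆ s ×ˢ t) :
    ∫ a, ∫ b, F (a, b) ∂ν ∂μ = ∫ a in s, ∫ b in t, F (a, b) ∂ν ∂μ := by
  have hsupp' : support (F ∘ Prod.swap) ⊆ t ×ˢ s := fun p hp => (hsupp hp).symm
  have hinner (a : α) : ∫ b, F (a, b) ∂ν = ∫ b in t, F (a, b) ∂ν :=
    integral_left_eq_setIntegral_of_support_subset_prod hsupp' a
  simp_rw [hinner]
  exact (setIntegral_eq_integral_of_forall_compl_eq_zero fun a ha =>
    integral_left_eq_zero_of_support_subset_prod hsupp' ha).symm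

theorem integral_integral_swap_of_support_subset_prod (hμs : μ s ≠ ⊤) (hνt : ν t ≠ ⊤)
    (hF : StronglyMeasurable F) {C : ℝ} (hC : ∀ p, ‖F p‖ ≤ C) (hsupp : support F ⊆ s ×ˢ t) :
    ∫ a, ∫ b, F (a, b) ∂ν ∂μ = ∫ b, ∫ a, F (a, b) ∂μ ∂ν := by
  have : IsFiniteMeasure (μ.restrict s) := isFiniteMeasure_restrict.mpr hμs
  have : IsFiniteMeasure (ν.restrict t) := isFiniteMeasure_restrict.mpr hνt
  have hsupp' : support (F ∘ Prod.swap) ⊆ t ×ˢ s := fun p hp => (hsupp hp).symm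
  calc ∫ a, ∫ b, F (a, b) ∂ν ∂μ = ∫ a in s, ∫ b in t, F (a, b) ∂ν ∂μ :=
        integral_integral_eq_setIntegral_setIntegral hsupp
    _ = ∫ b in t, ∫ a in s, F (a, b) ∂μ ∂ν :=
        integral_integral_swap (.of_bound hF.aestronglyMeasurable C (.of_forall hC))
    _ = ∫ b, ∫ a, F (a, b) ∂μ ∂ν :=
        (integral_integral_eq_setIntegral_setIntegral (F := F ∘ Prod.swap) hsupp').symm

theorem integrable_integral_left_of_support_subset_prod (hμs : μ s ≠ ⊤) (hνt : ν t ≠ ⊤)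
    (hF : StronglyMeasurable F) {C : ℝ} (hC : ∀ p, ‖F p‖ ≤ C) (hsupp : support F ⊆ s ×ˢ t) :
    Integrable (fun b => ∫ a, F (a, b) ∂μ) ν := by
  have : IsFiniteMeasure (μ.restrict s) := isFiniteMeasure_restrict.mpr hμs
  refine integrable_of_bounded_of_support_subset hνt ?_ (C := C * μ.real s) (fun b => ?_)
    fun b hb => by_contra fun hbt => hb (integral_left_eq_zero_of_support_subset_prod hsupp hbt)
  · rw [funext (integral_left_eq_setIntegral_of_support_subset_prod hsupp)]
    exact hF.integral_prod_left'.aestronglyMeasurable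
  · rw [integral_left_eq_setIntegral_of_support_subset_prod hsupp]
    exact norm_setIntegral_le_of_norm_le_const hμs.lt_top fun a _ => hC (a, b)

end FiniteRectangle

theorem isCompact_setOf_smul_mem {G X : Type*} [Group G] [TopologicalSpace G] [TopologicalSpace X]
    [MulAction G X] [ProperSMul G X] {L : Set X} (hL : IsCompact L) (x : X) :
    IsCompact {g : G | g • x ∈ L} := by
  simpa using ProperSMul.isCompact_setOfPred_inter_nonempty (G := G) isCompact_singleton hL

section Propagation

variable {X : Type*} [MetricSpace X] {κ κ' : X × X → ℂ} {r r' : ℝ}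

theorem dist_le_of_kernel_ne_zero (hκ : ∀ x x' : X, r < dist x x' → κ (x, x') = 0) {x x' : X}
    (h : κ (x, x') ≠ 0) : dist x x' ≤ r :=
  not_lt.mp (mt (hκ x x') h)

theorem support_kernel_smul_mul_subset {G : Type*} [Group G] [MulAction G X]
    (hκ : ∀ x x' : X, r < dist x x' → κ (x, x') = 0)
    (hκ' : ∀ x x' : X, r' < dist x x' → κ' (x, x') = 0) (x x' : X) :
    support (fun p : G × X => κ (p.1 • x, p.2) * κ' (p.2, x')) ⊆
      {g : G | g • x ∈ closedBall x' (r + r')} ×ˢ closedBall x' r' := by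
  intro p hp
  have h₁ := dist_le_of_kernel_ne_zero hκ (left_ne_zero_of_mul hp)
  have h₂ := dist_le_of_kernel_ne_zero hκ' (right_ne_zero_of_mul hp)
  exact ⟨(dist_triangle _ _ _).trans (add_le_add h₁ h₂), h₂⟩

theorem integrable_kernel_mul [MeasurableSpace X] [ProperSpace X] {μ : Measure X}
    [IsFiniteMeasureOnCompacts μ] {C C' : ℝ} (hκm : Measurable κ) (hκ'm : Measurable κ')
    (hκb : ∀ p, ‖κ p‖ ≤ C) (hκ'b : ∀ p, ‖κ' p‖ ≤ C')
    (hκ : ∀ x x' : X, r < dist x x' → κ (x, x') = 0) (x x' : X) :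
    Integrable (fun y => κ (x, y) * κ' (y, x')) μ := by
  refine integrable_of_bounded_of_support_subset (isCompact_closedBall x r).measure_lt_top.ne
    ?_ (fun y => norm_mul_le_of_le (hκb _) (hκ'b _)) fun y hy => ?_
  · exact ((hκm.comp measurable_prodMk_left).mul
      (hκ'm.comp measurable_prodMk_right)).aestronglyMeasurable
  · exact mem_closedBall_comm.mp (dist_le_of_kernel_ne_zero hκ (left_ne_zero_of_mul hy))

end Propagation

theorem measurable_kernel_smul_mul {G X : Type*} [Group G] [TopologicalSpace G]
    [MeasurableSpace G] [OpensMeasurableSpace G] [TopologicalSpace X] [MeasurableSpace X]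
    [BorelSpace X] [MulAction G X] [ContinuousSMul G X] {κ κ' : X × X → ℂ}
    (hκm : Measurable κ) (hκ'm : Measurable κ') (x x' : X) :
    Measurable fun p : G × X => κ (p.1 • x, p.2) * κ' (p.2, x') :=
  (hκm.comp ((continuous_id.smul continuous_const).measurable.prodMap measurable_id)).mul
    ((hκ'm.comp measurable_prodMk_right).comp measurable_snd)

section Average

variable {G X : Type*} [Group G] [MeasurableSpace G] [MulAction G X]

noncomputable def kernelAverage (μG : Measure G) (κ : X × X → ℂ) : X × X → ℂ :=
  fun p => ∫ g, κ (g⁻¹ • p.1, p.2) ∂μG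

noncomputable def kernelComp [MeasurableSpace X] (μ : Measure X) (κ κ' : X × X → ℂ) :
    X × X → ℂ :=
  fun p => ∫ y, κ (p.1, y) * κ' (y, p.2) ∂μ

variable {μG : Measure G} {κ κ' : X × X → ℂ}

theorem kernelAverage_eq_integral_smul [MeasurableInv G] [μG.IsInvInvariant] (x x' : X) :
    kernelAverage μG κ (x, x') = ∫ g, κ (g • x, x') ∂μG :=
  integral_inv_eq_self (fun g => κ (g • x, x')) μG

theorem kernelAverage_smul_right [MeasurableMul G] [MeasurableInv G]
    [μG.IsMulLeftInvariant] [μG.IsInvInvariant]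
    (hκ : ∀ (g : G) (x x' : X), κ (g • x, g • x') = κ (x, x')) (x z : X) (h : G) :
    kernelAverage μG κ (x, h • z) = kernelAverage μG κ (x, z) := by
  have hshift (g : G) : κ (g • x, h • z) = κ ((h⁻¹ * g) • x, z) := by
    rw [← hκ h⁻¹, inv_smul_smul, mul_smul]
  simp_rw [kernelAverage_eq_integral_smul, hshift]
  exact integral_mul_left_eq_self (fun g => κ (g • x, z)) h⁻¹

theorem kernelAverage_mul_eq_integral [MeasurableInv G] [μG.IsInvInvariant] (x y x' : X) :
    kernelAverage μG κ (x, y) * κ' (y, x') = ∫ g, κ (g • x, y) * κ' (y, x') ∂μG := by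
  rw [kernelAverage_eq_integral_smul, integral_mul_const]

variable [TopologicalSpace G] [OpensMeasurableSpace G] [MeasurableInv G] [μG.IsInvInvariant]
  [IsFiniteMeasureOnCompacts μG] [MetricSpace X] [ProperSpace X] [MeasurableSpace X]
  [BorelSpace X] [ProperSMul G X] {μ : Measure X} [IsFiniteMeasureOnCompacts μ]
  {r r' C C' : ℝ}

theorem integrable_kernelAverage_mul (hκm : Measurable κ) (hκ'm : Measurable κ')
    (hκb : ∀ p, ‖κ p‖ ≤ C) (hκ'b : ∀ p, ‖κ' p‖ ≤ C')
    (hκ : ∀ x x' : X, r < dist x x' → κ (x, x') = 0)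
    (hκ' : ∀ x x' : X, r' < dist x x' → κ' (x, x') = 0) (x x' : X) :
    Integrable (fun y => kernelAverage μG κ (x, y) * κ' (y, x')) μ := by
  simp_rw [kernelAverage_mul_eq_integral]
  exact integrable_integral_left_of_support_subset_prod
    (isCompact_setOf_smul_mem (isCompact_closedBall x' (r + r')) x).measure_lt_top.ne
    (isCompact_closedBall x' r').measure_lt_top.ne
    (measurable_kernel_smul_mul hκm hκ'm x x').stronglyMeasurable
    (fun p => norm_mul_le_of_le (hκb _) (hκ'b _)) (support_kernel_smul_mul_subset hκ hκ' x x')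

theorem kernelAverage_kernelComp_eq_integral (hκm : Measurable κ) (hκ'm : Measurable κ')
    (hκb : ∀ p, ‖κ p‖ ≤ C) (hκ'b : ∀ p, ‖κ' p‖ ≤ C')
    (hκ : ∀ x x' : X, r < dist x x' → κ (x, x') = 0)
    (hκ' : ∀ x x' : X, r' < dist x x' → κ' (x, x') = 0) (x x' : X) :
    kernelAverage μG (kernelComp μ κ κ') (x, x') =
      ∫ y, kernelAverage μG κ (x, y) * κ' (y, x') ∂μ := by
  simp_rw [kernelAverage_mul_eq_integral, kernelAverage_eq_integral_smul]
  exact integral_integral_swap_of_support_subset_prod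
    (isCompact_setOf_smul_mem (isCompact_closedBall x' (r + r')) x).measure_lt_top.ne
    (isCompact_closedBall x' r').measure_lt_top.ne
    (measurable_kernel_smul_mul hκm hκ'm x x').stronglyMeasurable
    (fun p => norm_mul_le_of_le (hκb _) (hκ'b _)) (support_kernel_smul_mul_subset hκ hκ' x x')

theorem kernelAverage_kernelComp [MeasurableMul G] [μG.IsMulLeftInvariant] {Ω : Type*}
    [MeasurableSpace Ω] {ν : Measure Ω} {s₀ : Ω → X}
    (hWeil : ∀ φ : X → ℂ, Integrable φ μ → ∫ x, φ x ∂μ = ∫ ω, ∫ g, φ (g • s₀ ω) ∂μG ∂ν)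
    (hκm : Measurable κ) (hκ'm : Measurable κ') (hκb : ∀ p, ‖κ p‖ ≤ C)
    (hκ'b : ∀ p, ‖κ' p‖ ≤ C') (hκe : ∀ (g : G) (x x' : X), κ (g • x, g • x') = κ (x, x'))
    (hκ : ∀ x x' : X, r < dist x x' → κ (x, x') = 0)
    (hκ' : ∀ x x' : X, r' < dist x x' → κ' (x, x') = 0) (x x' : X) :
    kernelAverage μG (kernelComp μ κ κ') (x, x') =
      ∫ ω, kernelAverage μG κ (x, s₀ ω) * kernelAverage μG κ' (s₀ ω, x') ∂ν := by
  rw [kernelAverage_kernelComp_eq_integral hκm hκ'm hκb hκ'b hκ hκ' x x',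
    hWeil _ (integrable_kernelAverage_mul hκm hκ'm hκb hκ'b hκ hκ' x x')]
  simp_rw [kernelAverage_smul_right hκe, integral_const_mul,
    kernelAverage_eq_integral_smul (κ := κ')]

end Average

theorem averaged_kernel_multiplicative_general
    {G X : Type*}
    [Group G] [TopologicalSpace G] [IsTopologicalGroup G]
    [MeasurableSpace G] [BorelSpace G]
    (μG : Measure G) [μG.IsHaarMeasure] [μG.IsInvInvariant]
    [MetricSpace X] [ProperSpace X] [MeasurableSpace X] [BorelSpace X]
    [MulAction G X]
    (hproper : IsProperMap fun p : G × X => (p.1 • p.2, p.2))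
    (μ : Measure X) [IsLocallyFiniteMeasure μ]
    [MeasurableSpace (Quotient (MulAction.orbitRel G X))]
    (ν : Measure (Quotient (MulAction.orbitRel G X)))
    (s₀ : Quotient (MulAction.orbitRel G X) → X)
    (hWeil : ∀ φ : X → ℂ, Integrable φ μ →
      ∫ x, φ x ∂μ = ∫ ω, ∫ g, φ (g • s₀ ω) ∂μG ∂ν)
    (κ κ' : X × X → ℂ) (r r' : ℝ)
    (hκ_meas : Measurable κ) (hκ'_meas : Measurable κ')
    (hκ_bdd : ∃ C, ∀ p, ‖κ p‖ ≤ C) (hκ'_bdd : ∃ C, ∀ p, ‖κ' p‖ ≤ C)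
    (hκ_equiv : ∀ (g : G) (x x' : X), κ (g • x, g • x') = κ (x, x'))
    (hκ_prop : ∀ x x' : X, r < dist x x' → κ (x, x') = 0)
    (hκ'_prop : ∀ x x' : X, r' < dist x x' → κ' (x, x') = 0) :
    (∀ x x' : X, (∀ y : X, y ∉ Metric.closedBall x r → κ (x, y) * κ' (y, x') = 0) ∧
      Integrable (fun y : X => κ (x, y) * κ' (y, x')) μ) ∧
    (∀ x x' : X,
      ∫ g : G, (∫ y : X, κ (g⁻¹ • x, y) * κ' (y, x') ∂μ) ∂μG =
        ∫ ω, (∫ g : G, κ (g⁻¹ • x, s₀ ω) ∂μG) *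
          (∫ g : G, κ' (g⁻¹ • s₀ ω, x') ∂μG) ∂ν) := by
  have : ProperSMul G X := ⟨hproper⟩
  obtain ⟨C, hC⟩ := hκ_bdd
  obtain ⟨C', hC'⟩ := hκ'_bdd
  refine ⟨fun x x' => ⟨fun y hy => ?_, integrable_kernel_mul hκ_meas hκ'_meas hC hC' hκ_prop x x'⟩,
    kernelAverage_kernelComp hWeil hκ_meas hκ'_meas hC hC' hκ_equiv hκ_prop hκ'_prop⟩
  rw [hκ_prop x y (by simpa [dist_comm] using hy), zero_mul]

/-- For bounded Borel `G`-equivariant kernels `κ, κ'` of finite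
propagation, the composed kernel `(κ ⋆ κ')(x,x') = ∫_X κ(x,y) κ'(y,x') dμ(y)` is given by
a μ-integrable integrand, and the averaging map is multiplicative:
`Av(κ ⋆ κ')(x,x') = ∫_{X/G} Av(κ)(x, s₀(ω)) · Av(κ')(s₀(ω), x') dν(ω)`. -/
theorem averaged_kernel_multiplicative
    {G X : Type*}
    [Group G] [TopologicalSpace G] [IsTopologicalGroup G] [LocallyCompactSpace G] [T2Space G]
    [MeasurableSpace G] [BorelSpace G]
    (μG : Measure G) [μG.IsHaarMeasure] [μG.IsMulRightInvariant] [μG.IsInvInvariant]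
    [MetricSpace X] [ProperSpace X] [MeasurableSpace X] [BorelSpace X]
    [MulAction G X] [ContinuousSMul G X]
    (hiso : ∀ (g : G) (x y : X), dist (g • x) (g • y) = dist x y)
    (hproper : IsProperMap fun p : G × X => (p.1 • p.2, p.2))
    (μ : Measure X) [SMulInvariantMeasure G X μ] [IsLocallyFiniteMeasure μ]
    [MeasurableSpace (Quotient (MulAction.orbitRel G X))]
    (ν : Measure (Quotient (MulAction.orbitRel G X)))
    (s₀ : Quotient (MulAction.orbitRel G X) → X)
    (hs₀_meas : Measurable s₀)
    (hs₀_sec : ∀ ω, Quotient.mk (MulAction.orbitRel G X) (s₀ ω) = ω)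
    (hWeil : ∀ φ : X → ℂ, Integrable φ μ →
      ∫ x, φ x ∂μ = ∫ ω, ∫ g, φ (g • s₀ ω) ∂μG ∂ν)
    (κ κ' : X × X → ℂ) (r r' : ℝ)
    (hκ_meas : Measurable κ) (hκ'_meas : Measurable κ')
    (hκ_bdd : ∃ C, ∀ p, ‖κ p‖ ≤ C) (hκ'_bdd : ∃ C, ∀ p, ‖κ' p‖ ≤ C)
    (hκ_equiv : ∀ (g : G) (x x' : X), κ (g • x, g • x') = κ (x, x'))
    (hκ'_equiv : ∀ (g : G) (x x' : X), κ' (g • x, g • x') = κ' (x, x'))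
    (hκ_prop : ∀ x x' : X, r < dist x x' → κ (x, x') = 0)
    (hκ'_prop : ∀ x x' : X, r' < dist x x' → κ' (x, x') = 0) :
    (∀ x x' : X, (∀ y : X, y ∉ Metric.closedBall x r → κ (x, y) * κ' (y, x') = 0) ∧
      Integrable (fun y : X => κ (x, y) * κ' (y, x')) μ) ∧
    (∀ x x' : X,
      ∫ g : G, (∫ y : X, κ (g⁻¹ • x, y) * κ' (y, x') ∂μ) ∂μG =
        ∫ ω, (∫ g : G, κ (g⁻¹ • x, s₀ ω) ∂μG) *
          (∫ g : G, κ' (g⁻¹ • s₀ ω, x') ∂μG) ∂ν) :=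
  averaged_kernel_multiplicative_general μG hproper μ ν s₀ hWeil κ κ' r r' hκ_meas hκ'_meas hκ_bdd
    hκ'_bdd hκ_equiv hκ_prop hκ'_prop
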